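/- For every closed set A ⊆ ℂⁿ such that ∫_A |z|² dν_n(z) < ∞, the function t ↦ ν_n(tA) is differentiable at t = 1 and (d/dt) ν_n(tA)|_{t=1} = 2n·ν_n(A) − ∫_A |z|² dν_n(z). -/

import Mathlib

/-!
Substituting `z = t • w` (Lebesgue measure on `ℂⁿ ≅ ℝ²ⁿ` scales by `t²ⁿ`) gives
`ν_n(tA) = (2π)⁻ⁿ t²ⁿ ∫_A exp(-t²|w|²/2) dw`. The integrand is differentiable in `t`, and near
`t = 1` its `t`-derivative `-t|w|² exp(-t²|w|²/2)` is dominated by `24 exp(-|w|²/16)`, which is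
integrable; differentiating under the integral sign and applying the product rule at `t = 1`
gives `2n ν_n(A) - ∫_A |w|² dν_n`.
-/

open MeasureTheory Real Set
open scoped Pointwise

/-- The standard Gaussian measure `ν_n` on `ℂⁿ`, with density
`(2π)⁻ⁿ exp(-|z|²/2)` with respect to Lebesgue measure. -/
noncomputable def nuC (n : ℕ) : MeasureTheory.Measure (Fin n → ℂ) :=
  MeasureTheory.volume.withDensity fun z =>
    ENNReal.ofReal (((2 * Real.pi) ^ n)⁻¹ * Real.exp (-(∑ k, ‖z k‖ ^ 2) / 2))

/-- The cylinder `{z ∈ ℂⁿ : |z₁| ≤ R}`. -/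
def cylC {n : ℕ} (hn : 0 < n) (R : ℝ) : Set (Fin n → ℂ) :=
  {z | ‖z ⟨0, hn⟩‖ ≤ R}

section GaussianIntegrability

variable {V : Type*} [NormedAddCommGroup V] [InnerProductSpace ℝ V] [FiniteDimensional ℝ V]
  [MeasurableSpace V] [BorelSpace V]

theorem integrable_exp_neg_mul_sq_norm {b : ℝ} (hb : 0 < b) :
    Integrable fun v : V => rexp (-b * ‖v‖ ^ 2) := by
  have h := (GaussianFourier.integrable_cexp_neg_mul_sq_norm_add (V := V) (b := b)
    (by simpa) 0 0).norm
  refine h.congr (Filter.Eventually.of_forall fun v => ?_)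
  simp [Complex.norm_exp, ← Complex.ofReal_pow]

theorem integrable_exp_neg_mul_sum_sq_norm {ι : Type*} [Fintype ι] {b : ℝ} (hb : 0 < b) :
    Integrable fun z : ι → V => rexp (-(b * ∑ i, ‖z i‖ ^ 2)) := by
  simp_rw [Finset.mul_sum, ← Finset.sum_neg_distrib, Real.exp_sum, ← neg_mul]
  exact Integrable.fintype_prod fun _ => integrable_exp_neg_mul_sq_norm hb

end GaussianIntegrability

theorem sum_sq_norm_smul {ι V : Type*} [Fintype ι] [SeminormedAddCommGroup V] [NormedSpace ℝ V]
    (t : ℝ) (z : ι → V) : ∑ i, ‖(t • z) i‖ ^ 2 = t ^ 2 * ∑ i, ‖z i‖ ^ 2 := by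
  simp only [Finset.mul_sum, Pi.smul_apply, norm_smul, mul_pow, Real.norm_eq_abs, sq_abs]

theorem abs_mul_mul_exp_neg_sq_mul_le {t q : ℝ} (ht : t ∈ Metric.ball (1 : ℝ) (1 / 2))
    (hq : 0 ≤ q) : |t * q * rexp (-(t ^ 2 * q) / 2)| ≤ 24 * rexp (-(q / 16)) := by
  rw [Metric.mem_ball, Real.dist_eq, abs_lt] at ht
  have ht_pos : 0 < t := by linarith
  have ht_sq : 1 / 4 ≤ t ^ 2 := by nlinarith
  have hq_le : q ≤ 16 * rexp (q / 16) := by linarith [Real.add_one_le_exp (q / 16)]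
  have h_exp : rexp (-(t ^ 2 * q) / 2) ≤ rexp (-(q / 8)) :=
    Real.exp_le_exp.2 (by nlinarith [mul_le_mul_of_nonneg_right ht_sq hq])
  rw [abs_of_nonneg (by positivity)]
  calc t * q * rexp (-(t ^ 2 * q) / 2)
      ≤ 3 / 2 * (16 * rexp (q / 16)) * rexp (-(q / 8)) := by
        gcongr
        linarith
    _ = 24 * rexp (-(q / 16)) := by
        rw [mul_assoc, mul_assoc, ← Real.exp_add]; ring_nf

theorem hasDerivAt_integral_exp_neg_sq_mul {X : Type*} [MeasurableSpace X] {μ : Measure X}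
    {q : X → ℝ} (hq : ∀ x, 0 ≤ q x) (hq_meas : AEStronglyMeasurable q μ)
    (hq_int : ∀ b > 0, Integrable (fun x => rexp (-(b * q x))) μ) :
    HasDerivAt (fun t : ℝ => ∫ x, rexp (-(t ^ 2 * q x) / 2) ∂μ)
      (-∫ x, q x * rexp (-q x / 2) ∂μ) 1 := by
  set F : ℝ → X → ℝ := fun t x => rexp (-(t ^ 2 * q x) / 2)
  set F' : ℝ → X → ℝ := fun t x => -(t * q x * rexp (-(t ^ 2 * q x) / 2))
  have hF_deriv : ∀ x t, HasDerivAt (F · x) (F' t x) t := fun x t => by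
    refine (((hasDerivAt_pow 2 t).mul_const (q x)).neg.div_const 2).exp.congr_deriv ?_
    simp only [F', Pi.neg_apply]
    push_cast
    ring
  have hF_meas : ∀ t, AEStronglyMeasurable (F t) μ := fun t =>
    (by fun_prop : Continuous fun s : ℝ => rexp (-(t ^ 2 * s) / 2)).comp_aestronglyMeasurable
      hq_meas
  have hF_int : Integrable (F 1) μ := by
    simpa [F, neg_div, div_eq_inv_mul] using hq_int (1 / 2) (by norm_num)
  have hF'_meas : AEStronglyMeasurable (F' 1) μ :=
    ((aestronglyMeasurable_const.mul hq_meas).mul (hF_meas 1)).neg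
  have key := hasDerivAt_integral_of_dominated_loc_of_deriv_le (μ := μ) (x₀ := 1)
    (bound := fun x => 24 * rexp (-(q x / 16)))
    (Metric.ball_mem_nhds 1 (by norm_num : (0 : ℝ) < 1 / 2))
    (Filter.Eventually.of_forall hF_meas) hF_int hF'_meas
    (Filter.Eventually.of_forall fun x t ht => by
      simpa [F', Real.norm_eq_abs] using abs_mul_mul_exp_neg_sq_mul_le ht (hq x))
    (by simpa [div_eq_inv_mul] using (hq_int (1 / 16) (by norm_num)).const_mul 24)
    (Filter.Eventually.of_forall fun x t _ => hF_deriv x t)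
  refine key.2.congr_deriv ?_
  simp [F', integral_neg]

theorem integrable_exp_neg_sum_sq_norm_div_two (n : ℕ) :
    Integrable fun z : Fin n → ℂ => rexp (-(∑ k, ‖z k‖ ^ 2) / 2) := by
  simpa [neg_div, div_eq_inv_mul] using
    integrable_exp_neg_mul_sum_sq_norm (V := ℂ) (ι := Fin n) (b := 1 / 2) (by norm_num)

theorem nuC_apply_toReal (n : ℕ) (S : Set (Fin n → ℂ)) :
    (nuC n S).toReal = ((2 * π) ^ n)⁻¹ * ∫ z in S, rexp (-(∑ k, ‖z k‖ ^ 2) / 2) := by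
  rw [nuC, withDensity_apply' _ S, ← integral_const_mul,
    ← ofReal_integral_eq_lintegral_ofReal
      ((integrable_exp_neg_sum_sq_norm_div_two n).const_mul _).integrableOn
      (ae_of_all _ fun z => by positivity),
    ENNReal.toReal_ofReal (integral_nonneg fun z => by positivity)]

theorem setIntegral_nuC (n : ℕ) (S : Set (Fin n → ℂ)) (g : (Fin n → ℂ) → ℝ) :
    ∫ z in S, g z ∂nuC n
      = ((2 * π) ^ n)⁻¹ * ∫ z in S, g z * rexp (-(∑ k, ‖z k‖ ^ 2) / 2) := by
  have h_meas : AEMeasurable (fun z : Fin n → ℂ =>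
      (((2 * π) ^ n)⁻¹ * rexp (-(∑ k, ‖z k‖ ^ 2) / 2)).toNNReal) (volume.restrict S) :=
    (by fun_prop : Continuous fun z : Fin n → ℂ =>
      ((2 * π) ^ n)⁻¹ * rexp (-(∑ k, ‖z k‖ ^ 2) / 2)).measurable.real_toNNReal.aemeasurable
  refine (setIntegral_withDensity_eq_setIntegral_smul₀' S h_meas g).trans ?_
  rw [← integral_const_mul]
  refine integral_congr_ae (ae_of_all _ fun z => ?_)
  dsimp only
  rw [NNReal.smul_def, smul_eq_mul, Real.coe_toNNReal _ (by positivity)]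
  ring

theorem nuC_smul_toReal (n : ℕ) (A : Set (Fin n → ℂ)) {t : ℝ} (ht : 0 < t) :
    (nuC n (t • A)).toReal
      = ((2 * π) ^ n)⁻¹ * (t ^ (2 * n) * ∫ z in A, rexp (-(t ^ 2 * ∑ k, ‖z k‖ ^ 2) / 2)) := by
  have h := Measure.setIntegral_comp_smul_of_pos volume
    (fun z : Fin n → ℂ => rexp (-(∑ k, ‖z k‖ ^ 2) / 2)) A ht
  have h_dim : Module.finrank ℝ (Fin n → ℂ) = 2 * n := by
    simp [Module.finrank_pi_fintype, mul_comm]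
  simp only [sum_sq_norm_smul, smul_eq_mul, h_dim] at h
  rw [nuC_apply_toReal, h]
  field_simp

theorem hasDerivAt_gaussian_dilation
    (n : ℕ) (A : Set (Fin n → ℂ)) :
    HasDerivAt (fun t : ℝ => (nuC n (t • A)).toReal)
      (2 * n * (nuC n A).toReal - ∫ z in A, ∑ k, ‖z k‖ ^ 2 ∂(nuC n))
      1 := by
  have hI := hasDerivAt_integral_exp_neg_sq_mul (μ := volume.restrict A)
    (q := fun z : Fin n → ℂ => ∑ k, ‖z k‖ ^ 2) (fun z => by positivity)
    (by fun_prop : Continuous fun z : Fin n → ℂ => ∑ k, ‖z k‖ ^ 2).aestronglyMeasurable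
    (fun b hb => (integrable_exp_neg_mul_sum_sq_norm hb).integrableOn)
  have h_dilation : (fun t : ℝ => (nuC n (t • A)).toReal) =ᶠ[nhds 1] fun t =>
      ((2 * π) ^ n)⁻¹ * (t ^ (2 * n) * ∫ z in A, rexp (-(t ^ 2 * ∑ k, ‖z k‖ ^ 2) / 2)) := by
    filter_upwards [eventually_gt_nhds one_pos] with t ht using nuC_smul_toReal n A ht
  refine ((((hasDerivAt_pow (2 * n) 1).mul hI).const_mul _).congr_of_eventuallyEq
    h_dilation).congr_deriv ?_
  rw [nuC_apply_toReal, setIntegral_nuC]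
  simp only [one_pow, one_mul, mul_one]
  push_cast
  ring
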